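/- arXiv:0905.4662 — 3 statements merged into one kernel-verified Lean document; each statement's English description precedes it below -/
import Mathlib

section
/- Let φ : ℝ → ℝ → ℝ satisfy antisymmetry φ(x,y) = -φ(y,x) and monotonicity: x - y ≤ v - w implies φ(x,y) ≤ φ(v,w). Then for any finite graph G and any x, y : V → ℝ, the inner product ⟨Φ x - Φ y, x - y⟩ ≤ 0, where (Φ c)(i) = Σ_{j ∈ Nbr(i)} φ(c(j), c(i)). -/
/-!
Summing over ordered pairs of neighbours, the edge `{i, j}` contributes
`(φ(x j, x i) - φ(y j, y i)) * ((x i - y i) - (x j - y j))` once both orientations are combined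
through antisymmetry, and this is `≤ 0` because `φ` is monotone in the difference of its arguments.
-/

open Finset

namespace SimpleGraph

variable {V : Type*} [Fintype V] (G : SimpleGraph V) [DecidableRel G.Adj]

theorem sum_sum_neighborFinset_swap {M : Type*} [AddCommMonoid M] (g : V → V → M) :
    ∑ i, ∑ j ∈ G.neighborFinset i, g i j = ∑ i, ∑ j ∈ G.neighborFinset i, g j i :=
  Finset.sum_comm' fun i j => by simp [G.adj_comm]

theorem sum_sum_neighborFinset_nonpos {M : Type*} [AddCommGroup M] [LinearOrder M]
    [IsOrderedAddMonoid M] (g : V → V → M) (hg : ∀ i j, G.Adj i j → g i j + g j i ≤ 0) :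
    ∑ i, ∑ j ∈ G.neighborFinset i, g i j ≤ 0 := by
  have hdouble : 2 • ∑ i, ∑ j ∈ G.neighborFinset i, g i j
      = ∑ i, ∑ j ∈ G.neighborFinset i, (g i j + g j i) := by
    rw [two_nsmul]
    nth_rewrite 2 [G.sum_sum_neighborFinset_swap]
    simp only [← sum_add_distrib]
  have hpairs : ∑ i, ∑ j ∈ G.neighborFinset i, (g i j + g j i) ≤ 0 :=
    sum_nonpos fun i _ => sum_nonpos fun j hj => hg i j ((G.mem_neighborFinset i j).1 hj)
  exact (nsmul_nonpos_iff two_ne_zero).1 (hdouble ▸ hpairs)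

end SimpleGraph

theorem mul_sub_sub_nonneg_of_monotone_sub {R : Type*} [CommRing R] [LinearOrder R]
    [IsStrictOrderedRing R] {φ : R → R → R}
    (hmono : ∀ x y v w : R, x - y ≤ v - w → φ x y ≤ φ v w) (a a' b b' : R) :
    0 ≤ (φ a a' - φ b b') * ((a - a') - (b - b')) := by
  rcases le_total (a - a') (b - b') with h | h
  · exact mul_nonneg_of_nonpos_of_nonpos (sub_nonpos.2 (hmono _ _ _ _ h)) (sub_nonpos.2 h)
  · exact mul_nonneg (sub_nonneg.2 (hmono _ _ _ _ h)) (sub_nonneg.2 h)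

theorem stmt_2_general {V : Type} [Fintype V]
    (G : SimpleGraph V) [DecidableRel G.Adj]
    (φ : ℝ → ℝ → ℝ)
    (hanti : ∀ x y, φ x y = -φ y x)
    (hmono : ∀ x y v w : ℝ, x - y ≤ v - w → φ x y ≤ φ v w)
    (Φ : (V → ℝ) → V → ℝ)
    (hΦ : ∀ d i, Φ d i = ∑ j ∈ G.neighborFinset i, φ (d j) (d i))
    (x y : V → ℝ) :
    ∑ i, (Φ x i - Φ y i) * (x i - y i) ≤ 0 := by
  simp only [hΦ, ← sum_sub_distrib, sum_mul]
  refine G.sum_sum_neighborFinset_nonpos _ fun i j _ => ?_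
  have hedge := mul_sub_sub_nonneg_of_monotone_sub hmono (x j) (x i) (y j) (y i)
  rw [hanti (x i) (x j), hanti (y i) (y j)]
  linarith

theorem stmt_2 {V : Type} [Fintype V] [DecidableEq V]
    (G : SimpleGraph V) [DecidableRel G.Adj]
    (φ : ℝ → ℝ → ℝ)
    (hanti : ∀ x y, φ x y = -φ y x)
    (hmono : ∀ x y v w : ℝ, x - y ≤ v - w → φ x y ≤ φ v w)
    (Φ : (V → ℝ) → V → ℝ)
    (hΦ : ∀ d i, Φ d i = ∑ j ∈ G.neighborFinset i, φ (d j) (d i))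
    (x y : V → ℝ) :
    ∑ i, (Φ x i - Φ y i) * (x i - y i) ≤ 0 :=
  stmt_2_general G φ hanti hmono Φ hΦ x y
end

section
/- Let φ : ℝ → ℝ → ℝ be antisymmetric and monotone (x - y ≤ v - w ⟹ φ(x,y) ≤ φ(v,w)), let α > 0, and let ρ : V → ℝ. Then the equilibrium equation Σ_{j ∈ Nbr(i)} φ(c(j), c(i)) + ρ(i) - α·c(i) = 0 for all i has at most one solution c : V → ℝ. -/
/-!
Write `Φ c i = ∑_{j ∼ i} φ (c j) (c i)` for the net flux into `i`. For two solutions `x`, `y`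
the equations give `Φ x - Φ y = α (x - y)`, so `⟨Φ x - Φ y, x - y⟩ = α ‖x - y‖²`. Summing over
each edge from both ends and using antisymmetry, the left side is half a sum over oriented
edges of `(φ (x j) (x i) - φ (y j) (y i)) * ((x i - y i) - (x j - y j))`, and every such term
is `≤ 0` by monotonicity of `φ` in the difference of its arguments. Hence `x = y`.
-/

theorem flux_sub_mul_nonpos {φ : ℝ → ℝ → ℝ}
    (hmono : ∀ x y v w : ℝ, x - y ≤ v - w → φ x y ≤ φ v w) (a b c d : ℝ) :
    (φ a b - φ c d) * ((b - d) - (a - c)) ≤ 0 := by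
  rcases le_total (a - b) (c - d) with h | h
  · exact mul_nonpos_of_nonpos_of_nonneg (sub_nonpos.2 (hmono _ _ _ _ h)) (by linarith)
  · exact mul_nonpos_of_nonneg_of_nonpos (sub_nonneg.2 (hmono _ _ _ _ h)) (by linarith)

namespace SimpleGraph

variable {V : Type} [Fintype V] (G : SimpleGraph V) [DecidableRel G.Adj]

def netFlux (φ : ℝ → ℝ → ℝ) (c : V → ℝ) (i : V) : ℝ :=
  ∑ j ∈ G.neighborFinset i, φ (c j) (c i)

theorem sum_neighborFinset_comm (f : V → V → ℝ) :
    ∑ i, ∑ j ∈ G.neighborFinset i, f i j = ∑ i, ∑ j ∈ G.neighborFinset i, f j i :=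
  Finset.sum_comm' fun i j => by simp [G.adj_comm]

theorem two_mul_sum_neighborFinset_of_skew {F : V → V → ℝ} (hF : ∀ i j, F j i = -F i j)
    (u : V → ℝ) :
    2 * ∑ i, ∑ j ∈ G.neighborFinset i, F i j * u i =
      ∑ i, ∑ j ∈ G.neighborFinset i, F i j * (u i - u j) := by
  have hswap : ∑ i, ∑ j ∈ G.neighborFinset i, F i j * u i =
      -∑ i, ∑ j ∈ G.neighborFinset i, F i j * u j := by
    rw [G.sum_neighborFinset_comm, ← Finset.sum_neg_distrib]
    exact Finset.sum_congr rfl fun i _ => by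
      rw [← Finset.sum_neg_distrib]
      exact Finset.sum_congr rfl fun j _ => by rw [hF]; ring
  simp only [mul_sub, Finset.sum_sub_distrib]
  linarith

theorem sum_netFlux_sub_mul_nonpos {φ : ℝ → ℝ → ℝ} (hanti : ∀ x y, φ x y = -φ y x)
    (hmono : ∀ x y v w : ℝ, x - y ≤ v - w → φ x y ≤ φ v w) (x y : V → ℝ) :
    ∑ i, (G.netFlux φ x i - G.netFlux φ y i) * (x i - y i) ≤ 0 := by
  set F : V → V → ℝ := fun i j => φ (x j) (x i) - φ (y j) (y i)
  have hF : ∀ i j, F j i = -F i j := fun i j => by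
    simp only [F, hanti (x i), hanti (y i)]; ring
  have hpair : ∑ i, ∑ j ∈ G.neighborFinset i, F i j * ((x i - y i) - (x j - y j)) ≤ 0 :=
    Finset.sum_nonpos fun i _ => Finset.sum_nonpos fun j _ => by
      have := flux_sub_mul_nonpos hmono (x j) (x i) (y j) (y i)
      simp only [F]; linarith
  have hrow : ∀ i, G.netFlux φ x i - G.netFlux φ y i = ∑ j ∈ G.neighborFinset i, F i j :=
    fun i => (Finset.sum_sub_distrib ..).symm
  simp only [hrow, Finset.sum_mul]
  linarith [G.two_mul_sum_neighborFinset_of_skew hF (fun i => x i - y i)]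

end SimpleGraph

theorem stmt_4_general {V : Type} [Fintype V]
    (G : SimpleGraph V) [DecidableRel G.Adj]
    (φ : ℝ → ℝ → ℝ)
    (hanti : ∀ x y, φ x y = -φ y x)
    (hmono : ∀ x y v w : ℝ, x - y ≤ v - w → φ x y ≤ φ v w)
    (α : ℝ) (hα : 0 < α) (ρ : V → ℝ)
    (x y : V → ℝ)
    (hx : ∀ i, (∑ j ∈ G.neighborFinset i, φ (x j) (x i)) + ρ i - α * x i = 0)
    (hy : ∀ i, (∑ j ∈ G.neighborFinset i, φ (y j) (y i)) + ρ i - α * y i = 0) :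
    x = y := by
  have hdiff : ∀ i, G.netFlux φ x i - G.netFlux φ y i = α * (x i - y i) := fun i => by
    unfold SimpleGraph.netFlux; linarith [hx i, hy i]
  have hsq : α * ∑ i, (x i - y i) ^ 2 ≤ 0 := by
    have := G.sum_netFlux_sub_mul_nonpos hanti hmono x y
    simp only [hdiff] at this
    rw [Finset.mul_sum]
    simpa only [sq, mul_assoc] using this
  have hzero : ∑ i, (x i - y i) ^ 2 = 0 :=
    le_antisymm (nonpos_of_mul_nonpos_right hsq hα) (Finset.sum_nonneg fun i _ => sq_nonneg _)
  funext i
  have := (Finset.sum_eq_zero_iff_of_nonneg fun i _ => sq_nonneg (x i - y i)).1 hzero i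
    (Finset.mem_univ i)
  exact sub_eq_zero.1 (pow_eq_zero_iff two_ne_zero |>.1 this)

theorem stmt_4 {V : Type} [Fintype V] [DecidableEq V]
    (G : SimpleGraph V) [DecidableRel G.Adj]
    (φ : ℝ → ℝ → ℝ)
    (hanti : ∀ x y, φ x y = -φ y x)
    (hmono : ∀ x y v w : ℝ, x - y ≤ v - w → φ x y ≤ φ v w)
    (α : ℝ) (hα : 0 < α) (ρ : V → ℝ)
    (x y : V → ℝ)
    (hx : ∀ i, (∑ j ∈ G.neighborFinset i, φ (x j) (x i)) + ρ i - α * x i = 0)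
    (hy : ∀ i, (∑ j ∈ G.neighborFinset i, φ (y j) (y i)) + ρ i - α * y i = 0) :
    x = y :=
  stmt_4_general G φ hanti hmono α hα ρ x y hx hy
end

section
/- Let b : V → ℝ satisfy Σ_{i∈C} b(i) = 0 on every connected component C of an undirected forest G, and let Π be the signed incidence matrix of an orientation of G. Then there exists a unique vector π : E → ℝ with Π π = b. -/
/-!
Existence is the Fredholm alternative: `b` lies in the range of `Π` as soon as it is orthogonal to
every `x` with `x ᵀΠ = 0`. Such an `x` satisfies `x (s e) = x (t e)` on every edge, so it is constant
on connected components, and `x ⬝ b` vanishes because `b` sums to zero on each component.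
Uniqueness holds because every edge `e` of a forest is a bridge: the indicator `w` of the side of
`t e` in `G - e` satisfies `w ᵀΠ = δ_e`, so `π e = w ⬝ Π π` is determined by `Π π`.
-/

open Matrix

theorem Matrix.exists_mulVec_eq_of_forall_vecMul_eq_zero {K m n : Type*} [Field K] [Fintype m]
    [Fintype n] [DecidableEq m] (A : Matrix m n K) (b : m → K)
    (h : ∀ x : m → K, x ᵥ* A = 0 → x ⬝ᵥ b = 0) : ∃ π, A *ᵥ π = b := by
  suffices b ∈ LinearMap.range A.mulVecLin from this
  rw [← Subspace.forall_mem_dualAnnihilator_apply_eq_zero_iff]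
  intro φ hφ
  obtain ⟨x, rfl⟩ := (dotProductEquiv K m).surjective φ
  refine h x (dotProduct_eq_zero _ fun π => ?_)
  rw [← dotProduct_mulVec]
  exact (Submodule.mem_dualAnnihilator _).mp hφ _ (LinearMap.mem_range_self _ π)

theorem Matrix.mulVec_injective_of_forall_exists_vecMul_eq_single {R m n : Type*} [CommSemiring R]
    [Fintype m] [Fintype n] [DecidableEq n] (A : Matrix m n R)
    (h : ∀ j, ∃ w : m → R, w ᵥ* A = Pi.single j 1) : Function.Injective A.mulVec := by
  intro π π' hπ
  funext j
  obtain ⟨w, hw⟩ := h j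
  simpa [dotProduct_mulVec, hw, single_dotProduct] using congrArg (w ⬝ᵥ ·) hπ

theorem SimpleGraph.Reachable.eq_of_forall_adj_eq {V β : Type*} {G : SimpleGraph V} {f : V → β}
    (hf : ∀ u v, G.Adj u v → f u = f v) {u v : V} (huv : G.Reachable u v) : f u = f v := by
  obtain ⟨p⟩ := huv
  induction p with
  | nil => rfl
  | cons hadj _ ih => exact (hf _ _ hadj).trans ih

section Incidence

variable {V E R : Type*} (s t : E → V)

def underlyingGraph : SimpleGraph V :=
  SimpleGraph.fromRel fun i j => ∃ e, s e = i ∧ t e = j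

def incidenceMatrix [DecidableEq V] [Ring R] : Matrix V E R :=
  Matrix.of fun v e => if t e = v then 1 else if s e = v then -1 else 0

variable {s t}

theorem underlyingGraph_adj_ends (hloop : ∀ e, s e ≠ t e) (e : E) :
    (underlyingGraph s t).Adj (s e) (t e) :=
  ⟨hloop e, Or.inl ⟨e, rfl, rfl⟩⟩

theorem vecMul_incidenceMatrix [DecidableEq V] [Ring R] [Fintype V] (hloop : ∀ e, s e ≠ t e)
    (w : V → R) (e : E) : (w ᵥ* incidenceMatrix s t) e = w (t e) - w (s e) := by
  have hcol : ∀ v, incidenceMatrix s t v e =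
      (if t e = v then (1 : R) else 0) - (if s e = v then 1 else 0) := fun v => by
    by_cases ht : t e = v <;> by_cases hs : s e = v
    · exact absurd (hs.trans ht.symm) (hloop e)
    all_goals simp [incidenceMatrix, ht, hs]
  simp only [vecMul, dotProduct, hcol, mul_sub, mul_ite, mul_one, mul_zero,
    Finset.sum_sub_distrib, Finset.sum_ite_eq, Finset.mem_univ, if_true]

open Classical in
theorem exists_incidenceMatrix_mulVec_eq [DecidableEq V] [Field R] [Fintype V] [Fintype E]
    (hloop : ∀ e, s e ≠ t e) (b : V → R)
    (hb : ∀ C : (underlyingGraph s t).ConnectedComponent,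
      ∑ i ∈ Finset.univ.filter (fun i => (underlyingGraph s t).connectedComponentMk i = C),
        b i = 0) :
    ∃ π, incidenceMatrix s t *ᵥ π = b := by
  refine (incidenceMatrix s t).exists_mulVec_eq_of_forall_vecMul_eq_zero b fun x hx => ?_
  have hends : ∀ e, x (s e) = x (t e) := fun e => by
    simpa [vecMul_incidenceMatrix hloop, sub_eq_zero, eq_comm] using congrFun hx e
  have hadj : ∀ u v, (underlyingGraph s t).Adj u v → x u = x v := by
    rintro u v ⟨-, ⟨e, rfl, rfl⟩ | ⟨e, rfl, rfl⟩⟩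
    · exact hends e
    · exact (hends e).symm
  let xC : (underlyingGraph s t).ConnectedComponent → R :=
    SimpleGraph.ConnectedComponent.lift x fun _ _ p _ => p.reachable.eq_of_forall_adj_eq hadj
  calc x ⬝ᵥ b = ∑ C, ∑ i ∈ Finset.univ.filter
        (fun i => (underlyingGraph s t).connectedComponentMk i = C), xC C * b i := by
        rw [dotProduct, ← Finset.sum_fiberwise Finset.univ (underlyingGraph s t).connectedComponentMk]
        refine Finset.sum_congr rfl fun C _ => Finset.sum_congr rfl fun i hi => ?_
        rw [← (Finset.mem_filter.mp hi).2]
        rfl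
    _ = 0 := Finset.sum_eq_zero fun C _ => by rw [← Finset.mul_sum, hb, mul_zero]

theorem exists_vecMul_incidenceMatrix_eq_single [DecidableEq V] [Ring R] [Fintype V]
    [DecidableEq E] (hloop : ∀ e, s e ≠ t e) (hsimple : Function.Injective fun e => s(s e, t e))
    (hforest : (underlyingGraph s t).IsAcyclic) (e : E) :
    ∃ w : V → R, w ᵥ* incidenceMatrix s t = Pi.single e 1 := by
  classical
  set H := (underlyingGraph s t).deleteEdges {s(s e, t e)}
  have hbridge : ¬ H.Reachable (s e) (t e) :=
    SimpleGraph.isBridge_iff.mp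
      (SimpleGraph.isAcyclic_iff_forall_adj_isBridge.mp hforest (underlyingGraph_adj_ends hloop e))
  have hkept : ∀ f ≠ e, H.Adj (s f) (t f) := fun f hf =>
    SimpleGraph.deleteEdges_adj.mpr ⟨underlyingGraph_adj_ends hloop f, fun h => hf (hsimple h)⟩
  refine ⟨fun v => if H.Reachable v (t e) then 1 else 0, funext fun f => ?_⟩
  rw [vecMul_incidenceMatrix hloop]
  by_cases hf : f = e
  · subst hf
    simp [hbridge]
  · have hsides : H.Reachable (s f) (t e) ↔ H.Reachable (t f) (t e) :=
      ⟨(hkept f hf).symm.reachable.trans, (hkept f hf).reachable.trans⟩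
    simp [hsides, hf]

end Incidence

open Classical in
theorem stmt_13 {V E : Type} [Fintype V] [Fintype E] [DecidableEq V]
    (s t : E → V) (hloop : ∀ e, s e ≠ t e)
    (hnopar : ∀ e f, ((s e = s f ∧ t e = t f) ∨ (s e = t f ∧ t e = s f)) → e = f)
    (hforest : (SimpleGraph.fromRel (fun i j => ∃ e, s e = i ∧ t e = j)).IsAcyclic)
    (Inc : Matrix V E ℝ)
    (hInc : ∀ l k, Inc l k = if t k = l then 1 else if s k = l then -1 else 0)
    (b : V → ℝ)
    (hb : ∀ C : (SimpleGraph.fromRel (fun i j => ∃ e, s e = i ∧ t e = j)).ConnectedComponent,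
      ∑ i ∈ Finset.univ.filter
        (fun i => (SimpleGraph.fromRel (fun i j => ∃ e, s e = i ∧ t e = j)).connectedComponentMk i = C),
        b i = 0) :
    ∃! π : E → ℝ, Inc.mulVec π = b := by
  obtain rfl : Inc = incidenceMatrix s t := Matrix.ext hInc
  have hsimple : Function.Injective fun e => s(s e, t e) :=
    fun e f h => hnopar e f (Sym2.eq_iff.mp h)
  have hinj : Function.Injective (incidenceMatrix s t : Matrix V E ℝ).mulVec :=
    Matrix.mulVec_injective_of_forall_exists_vecMul_eq_single _
      (exists_vecMul_incidenceMatrix_eq_single hloop hsimple hforest)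
  obtain ⟨π, hπ⟩ := exists_incidenceMatrix_mulVec_eq hloop b hb
  exact ⟨π, hπ, fun π' hπ' => hinj (hπ'.trans hπ.symm)⟩
end
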